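/- A function μ : ZMod 5 → ℝ satisfies (μ n ≥ 0 for all n, μ is positive definite, and μ 0 = 1) if and only if μ lies in the convex hull of the following four functions p₁, p₂, p₃, p₄ : ZMod 5 → ℝ: p₁ 0 = 1 and p₁ n = 0 for n ≠ 0; p₂ 0 = 1, p₂ 1 = p₂ 4 = γ, p₂ 2 = p₂ 3 = 0; p₃ 0 = 1, p₃ 2 = p₃ 3 = γ, p₃ 1 = p₃ 4 = 0; p₄ n = 1 for all n; where γ = (√5 - 1)/2. -/

import Mathlib

open Finset
open scoped ComplexOrder

/-- A real-valued function on an additive abelian group is positive definite if all its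
"quadratic forms" with complex coefficients are real and nonnegative. -/
def IsPosDef {G : Type*} [AddCommGroup G] (g : G → ℝ) : Prop :=
  ∀ (N : ℕ) (x : Fin N → G) (c : Fin N → ℂ),
    0 ≤ ∑ i, ∑ j, c i * (starRingEnd ℂ) (c j) * (g (x i - x j) : ℂ)

noncomputable def γ : ℝ := (Real.sqrt 5 - 1) / 2

/-- `p₁` is the delta function at `0`. -/
def p₁ : ZMod 5 → ℝ := fun n => if n = 0 then 1 else 0

/-- `p₂ 0 = 1`, `p₂ 1 = p₂ 4 = γ`, `p₂ 2 = p₂ 3 = 0`. -/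
noncomputable def p₂ : ZMod 5 → ℝ := fun n =>
  if n = 0 then 1 else if n = 1 ∨ n = 4 then γ else 0

/-- `p₃ 0 = 1`, `p₃ 2 = p₃ 3 = γ`, `p₃ 1 = p₃ 4 = 0`. -/
noncomputable def p₃ : ZMod 5 → ℝ := fun n =>
  if n = 0 then 1 else if n = 2 ∨ n = 3 then γ else 0

/-- `p₄` is the constant function `1`. -/
def p₄ : ZMod 5 → ℝ := fun _ => 1


/-!
Positive definiteness forces `μ (-n) = μ n`, so a normalized `μ` is determined by
`a = μ 1 = μ 4` and `b = μ 2 = μ 3`. Testing positive definiteness against the characters of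
`ZMod 5` (Fourier coefficients are nonnegative), with `cos (2π/5) = γ/2` and
`cos (4π/5) = -(1 + γ)/2`, gives `(1 + γ) b ≤ 1 + γ a` and `(1 + γ) a ≤ 1 + γ b`. Together with
`a, b ≥ 0` this is the quadrilateral with vertices `(0,0), (γ,0), (0,γ), (1,1)`, the values of
`p₁, p₂, p₃, p₄`. Conversely `p₂ = (2γ+1)/5 + (4-2γ)/5 · cos (2πn/5)` is a nonnegative
combination of positive definite functions, `p₃ n = p₂ (2n)`, and the three defining conditions
are convex.
-/

section PositiveDefinite

variable {G : Type*} [AddCommGroup G] {g h : G → ℝ}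

lemma IsPosDef.add (hg : IsPosDef g) (hh : IsPosDef h) : IsPosDef (g + h) := by
  intro N x c
  simpa only [Pi.add_apply, Complex.ofReal_add, mul_add, sum_add_distrib]
    using add_nonneg (hg N x c) (hh N x c)

lemma IsPosDef.smul (hg : IsPosDef g) {r : ℝ} (hr : 0 ≤ r) : IsPosDef (r • g) := by
  intro N x c
  have key : ∑ i, ∑ j, c i * starRingEnd ℂ (c j) * (((r • g) (x i - x j) : ℝ) : ℂ)
      = r * ∑ i, ∑ j, c i * starRingEnd ℂ (c j) * (g (x i - x j) : ℂ) := by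
    simp only [Pi.smul_apply, smul_eq_mul, Complex.ofReal_mul, mul_sum]
    exact sum_congr rfl fun _ _ => sum_congr rfl fun _ _ => by ring
  rw [key]
  exact mul_nonneg (by exact_mod_cast hr) (hg N x c)

lemma IsPosDef.comp_addMonoidHom {H : Type*} [AddCommGroup H] (hg : IsPosDef g) (f : H →+ G) :
    IsPosDef (g ∘ f) := by
  intro N x c
  simpa only [Function.comp_apply, map_sub] using hg N (f ∘ x) c

lemma IsPosDef.map_neg (hg : IsPosDef g) (a : G) : g (-a) = g a := by
  have H := hg 2 ![0, a] ![1, Complex.I]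
  simp only [Fin.sum_univ_two, Matrix.cons_val_zero, Matrix.cons_val_one] at H
  have him : 0 = -g (-a) + g a := by simpa using (Complex.nonneg_iff.1 H).2
  linarith

lemma IsPosDef.sum_sum_nonneg (hg : IsPosDef g) {ι : Type*} [Fintype ι] (x : ι → G)
    (c : ι → ℂ) : 0 ≤ ∑ i, ∑ j, c i * starRingEnd ℂ (c j) * (g (x i - x j) : ℂ) := by
  let e := (Fintype.equivFin ι).symm
  exact (hg _ (x ∘ e) (c ∘ e)).trans_eq
    (Fintype.sum_equiv e _ _ fun _ => Fintype.sum_equiv e _ _ fun _ => rfl)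

lemma IsPosDef.of_eq_sum_mul {ι : Type*} [Fintype ι] {w : ι → ℝ} (hw : ∀ k, 0 ≤ w k)
    (v : ι → G → ℝ) (hg : ∀ a b, g (a - b) = ∑ k, w k * (v k a * v k b)) : IsPosDef g := by
  intro N x c
  have hsq : ∀ k, ∑ i, ∑ j, c i * starRingEnd ℂ (c j) * ((v k (x i) : ℂ) * v k (x j))
      = (∑ i, c i * v k (x i)) * starRingEnd ℂ (∑ i, c i * v k (x i)) := by
    intro k
    simp only [map_sum, map_mul, Complex.conj_ofReal, sum_mul_sum]
    exact sum_congr rfl fun _ _ => sum_congr rfl fun _ _ => by ring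
  have key : ∑ i, ∑ j, c i * starRingEnd ℂ (c j) * (g (x i - x j) : ℂ)
      = ∑ k, (w k : ℂ) * ((∑ i, c i * v k (x i)) * starRingEnd ℂ (∑ i, c i * v k (x i))) := by
    simp only [← hsq, hg, Complex.ofReal_sum, Complex.ofReal_mul, mul_sum]
    refine (sum_congr rfl fun i _ => sum_comm).trans (sum_comm.trans ?_)
    exact sum_congr rfl fun k _ => sum_congr rfl fun i _ => sum_congr rfl fun j _ => by ring
  rw [key]
  refine sum_nonneg fun k _ => mul_nonneg (by exact_mod_cast hw k) ?_
  rw [Complex.mul_conj]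
  exact_mod_cast Complex.normSq_nonneg _

lemma isPosDef_const {r : ℝ} (hr : 0 ≤ r) : IsPosDef (fun _ : G => r) :=
  IsPosDef.of_eq_sum_mul (ι := Unit) (fun _ => hr) (fun _ _ => 1) fun _ _ => by simp

lemma isPosDef_ite_eq_zero [Fintype G] [DecidableEq G] :
    IsPosDef (fun a : G => if a = 0 then 1 else 0) :=
  IsPosDef.of_eq_sum_mul (fun _ => zero_le_one) (fun k a => if a = k then 1 else 0)
    fun a b => by simp [sub_eq_zero]

lemma coe_addChar_sub_eq_mul_conj (ψ : AddChar G Circle) (a b : G) :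
    (ψ (a - b) : ℂ) = ψ a * starRingEnd ℂ (ψ b) := by
  rw [AddChar.map_sub_eq_div, div_eq_mul_inv, Circle.coe_mul, Circle.coe_inv_eq_conj]

lemma isPosDef_re_addChar (ψ : AddChar G Circle) : IsPosDef (fun a => (ψ a : ℂ).re) := by
  refine IsPosDef.of_eq_sum_mul (fun _ => zero_le_one)
    ![fun a => (ψ a : ℂ).re, fun a => (ψ a : ℂ).im] fun a b => ?_
  simp [coe_addChar_sub_eq_mul_conj, Complex.mul_re]

lemma IsPosDef.sum_mul_re_addChar_nonneg [Fintype G] (hg : IsPosDef g) (ψ : AddChar G Circle) :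
    0 ≤ ∑ a, g a * (ψ a : ℂ).re := by
  have H := (Complex.nonneg_iff.1 (hg.sum_sum_nonneg id fun a => (ψ a : ℂ))).1
  simp only [id, ← coe_addChar_sub_eq_mul_conj, Complex.re_sum, Complex.re_mul_ofReal] at H
  have hshift (a : G) : ∑ b, (ψ (a - b) : ℂ).re * g (a - b) = ∑ z, (ψ z : ℂ).re * g z :=
    Fintype.sum_equiv (Equiv.subLeft a) _ _ fun _ => rfl
  simp only [hshift, sum_const, card_univ, nsmul_eq_mul] at H
  simpa only [mul_comm] using
    (mul_nonneg_iff_of_pos_left (by exact_mod_cast Fintype.card_pos)).1 H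

lemma convex_setOf_normalized_isPosDef :
    Convex ℝ {ν : G → ℝ | (∀ a, 0 ≤ ν a) ∧ IsPosDef ν ∧ ν 0 = 1} := by
  rintro ν ⟨hν₀, hν, hν₁⟩ ρ ⟨hρ₀, hρ, hρ₁⟩ s r hs hr hsr
  refine ⟨fun a => ?_, (hν.smul hs).add (hρ.smul hr), ?_⟩
  · exact add_nonneg (mul_nonneg hs (hν₀ a)) (mul_nonneg hr (hρ₀ a))
  · simp [hν₁, hρ₁, hsr]

end PositiveDefinite

lemma smul_add_smul_add_smul_add_smul_mem_convexHull {E : Type*} [AddCommGroup E] [Module ℝ E]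
    {x₁ x₂ x₃ x₄ : E} {w₁ w₂ w₃ w₄ : ℝ} (h₁ : 0 ≤ w₁) (h₂ : 0 ≤ w₂) (h₃ : 0 ≤ w₃) (h₄ : 0 ≤ w₄)
    (hw : w₁ + w₂ + w₃ + w₄ = 1) :
    w₁ • x₁ + w₂ • x₂ + w₃ • x₃ + w₄ • x₄ ∈ convexHull ℝ {x₁, x₂, x₃, x₄} := by
  have := (convex_convexHull ℝ {x₁, x₂, x₃, x₄}).sum_mem (t := univ) (w := ![w₁, w₂, w₃, w₄])
    (z := ![x₁, x₂, x₃, x₄]) ?_ ?_ ?_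
  · simpa [Fin.sum_univ_four] using this
  · intro i _
    fin_cases i <;> assumption
  · simpa [Fin.sum_univ_four] using hw
  · intro i _
    fin_cases i <;> apply subset_convexHull <;> simp

lemma gamma_sq : γ ^ 2 = 1 - γ := by
  have := Real.sq_sqrt (show (0 : ℝ) ≤ 5 by norm_num)
  unfold γ
  linear_combination this / 4

lemma gamma_pos : 0 < γ := by
  have : (1 : ℝ) < √5 := by rw [Real.lt_sqrt zero_le_one]; norm_num
  unfold γ
  linarith

lemma gamma_lt_one : γ < 1 := by
  nlinarith [gamma_sq, gamma_pos]

-- The quadrilateral is cut along the diagonal `a + b = γ` into two triangles.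
lemma exists_convex_weights {a b : ℝ} (ha : 0 ≤ a) (hb : 0 ≤ b) (hab : (1 + γ) * b ≤ 1 + γ * a)
    (hba : (1 + γ) * a ≤ 1 + γ * b) :
    ∃ w₁ w₂ w₃ w₄ : ℝ, 0 ≤ w₁ ∧ 0 ≤ w₂ ∧ 0 ≤ w₃ ∧ 0 ≤ w₄ ∧ w₁ + w₂ + w₃ + w₄ = 1 ∧
      γ * w₂ + w₄ = a ∧ γ * w₃ + w₄ = b := by
  have hγ := gamma_pos
  rcases le_total (a + b) γ with h | h
  · refine ⟨1 - (a + b) / γ, a / γ, b / γ, 0, ?_, by positivity, by positivity, le_rfl,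
      by ring, by field_simp; ring, by field_simp; ring⟩
    rw [sub_nonneg, div_le_one hγ]
    exact h
  · obtain ⟨t, ht⟩ : ∃ t, t * (2 - γ) = a + b - γ :=
      ⟨_, div_mul_cancel₀ _ (by linarith [gamma_lt_one])⟩
    have hpos : 0 < (2 - γ) * (1 + γ) := by nlinarith [gamma_lt_one]
    have hta : (a - t) * ((2 - γ) * (1 + γ)) = 1 + γ * a - (1 + γ) * b := by
      linear_combination -(1 + γ) * ht + (1 - a) * gamma_sq
    have htb : (b - t) * ((2 - γ) * (1 + γ)) = 1 + γ * b - (1 + γ) * a := by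
      linear_combination -(1 + γ) * ht + (1 - b) * gamma_sq
    refine ⟨0, (a - t) / γ, (b - t) / γ, t, le_rfl, ?_, ?_, ?_, ?_, by field_simp; ring,
      by field_simp; ring⟩
    · exact div_nonneg ((mul_nonneg_iff_of_pos_right hpos).1 (by linarith)) hγ.le
    · exact div_nonneg ((mul_nonneg_iff_of_pos_right hpos).1 (by linarith)) hγ.le
    · nlinarith [gamma_lt_one]
    · field_simp
      linarith

section ZModFive

open Real ZMod

lemma zmod_five_cases (n : ZMod 5) : n = 0 ∨ n = 1 ∨ n = 2 ∨ n = 3 ∨ n = 4 := by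
  revert n; decide

lemma sum_zmod_five {M : Type*} [AddCommMonoid M] (f : ZMod 5 → M) :
    ∑ n, f n = f 0 + f 1 + f 2 + f 3 + f 4 :=
  Fin.sum_univ_five f

lemma re_toCircle_eq_cos {N : ℕ} [NeZero N] (n : ZMod N) :
    (toCircle n : ℂ).re = cos (2 * π * (n.val / N)) := by
  rw [toCircle_eq_circleExp, Circle.coe_exp, Complex.exp_ofReal_mul_I_re]

lemma cos_pi_div_five_eq_gamma : cos (π / 5) = (1 + γ) / 2 := by
  rw [cos_pi_div_five, γ]; ring

lemma re_toCircle_one : (toCircle (1 : ZMod 5) : ℂ).re = γ / 2 := by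
  rw [re_toCircle_eq_cos, show (1 : ZMod 5).val = 1 from rfl,
    show 2 * π * ((1 : ℕ) / (5 : ℕ)) = 2 * (π / 5) by push_cast; ring, cos_two_mul,
    cos_pi_div_five_eq_gamma]
  linear_combination gamma_sq / 2

lemma re_toCircle_two : (toCircle (2 : ZMod 5) : ℂ).re = -(1 + γ) / 2 := by
  rw [re_toCircle_eq_cos, show (2 : ZMod 5).val = 2 from rfl,
    show 2 * π * ((2 : ℕ) / (5 : ℕ)) = π - π / 5 by push_cast; ring, cos_pi_sub,
    cos_pi_div_five_eq_gamma]
  ring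

lemma re_toCircle_zmod_five (n : ZMod 5) : (toCircle n : ℂ).re =
    if n = 0 then 1 else if n = 1 ∨ n = 4 then γ / 2 else -(1 + γ) / 2 := by
  have hneg (a : ZMod 5) : (toCircle (-a) : ℂ).re = (toCircle a : ℂ).re :=
    (isPosDef_re_addChar toCircle).map_neg a
  obtain rfl | rfl | rfl | rfl | rfl := zmod_five_cases n
  · simp
  · simp +decide [re_toCircle_one]
  · simp +decide [re_toCircle_two]
  · simp +decide [show (3 : ZMod 5) = -2 from rfl, hneg, re_toCircle_two]
  · simp +decide [show (4 : ZMod 5) = -1 from rfl, hneg, re_toCircle_one]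

lemma IsPosDef.fourier_ineq_zmod_five {μ : ZMod 5 → ℝ} (hμ : IsPosDef μ) :
    (1 + γ) * (μ 2 + μ 3) ≤ 2 * μ 0 + γ * (μ 1 + μ 4) := by
  have H := hμ.sum_mul_re_addChar_nonneg toCircle
  simp +decide only [sum_zmod_five, re_toCircle_zmod_five, if_true, if_false] at H
  linarith

lemma p₂_eq_add_re_toCircle :
    p₂ = ((2 * γ + 1) / 5) • p₄ + ((4 - 2 * γ) / 5) • fun n => (toCircle n : ℂ).re := by
  funext n
  simp only [p₂, p₄, Pi.add_apply, Pi.smul_apply, smul_eq_mul, re_toCircle_zmod_five]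
  split_ifs
  · ring
  · linear_combination gamma_sq / 5
  · linear_combination -gamma_sq / 5

lemma p₃_eq_comp_mulLeft : p₃ = p₂ ∘ AddMonoidHom.mulLeft 2 := by
  funext n
  obtain rfl | rfl | rfl | rfl | rfl := zmod_five_cases n <;>
    simp +decide only [Function.comp_apply, AddMonoidHom.coe_mulLeft, p₂, p₃, if_true, if_false]

-- `r` and `G` are given explicitly below: inferring them by unification unfolds the instances on
-- `ℝ` and `ZMod 5` and times out.
lemma isPosDef_p₄ : IsPosDef p₄ := isPosDef_const (r := 1) zero_le_one

lemma isPosDef_p₂ : IsPosDef p₂ := by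
  have hψ : IsPosDef fun n : ZMod 5 => (toCircle n : ℂ).re :=
    isPosDef_re_addChar (G := ZMod 5) toCircle
  have hc₄ : 0 ≤ (2 * γ + 1) / 5 := by linarith [gamma_pos]
  have hcψ : 0 ≤ (4 - 2 * γ) / 5 := by linarith [gamma_lt_one]
  rw [p₂_eq_add_re_toCircle]
  exact (isPosDef_p₄.smul hc₄).add (hψ.smul hcψ)

lemma insert_subset_setOf_normalized_isPosDef :
    ({p₁, p₂, p₃, p₄} : Set (ZMod 5 → ℝ)) ⊆ {ν | (∀ n, 0 ≤ ν n) ∧ IsPosDef ν ∧ ν 0 = 1} := by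
  have hγ := gamma_pos
  rintro _ (rfl | rfl | rfl | rfl)
  · exact ⟨fun n => by unfold p₁; split_ifs <;> norm_num, isPosDef_ite_eq_zero, by simp [p₁]⟩
  · exact ⟨fun n => by unfold p₂; split_ifs <;> linarith, isPosDef_p₂, by simp [p₂]⟩
  · refine ⟨fun n => by unfold p₃; split_ifs <;> linarith, ?_, by simp [p₃]⟩
    rw [p₃_eq_comp_mulLeft]
    exact isPosDef_p₂.comp_addMonoidHom _
  · exact ⟨fun _ => zero_le_one, isPosDef_p₄, rfl⟩

end ZModFive

theorem pos_posdef_normalized_iff_convexHull (μ : ZMod 5 → ℝ) :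
    ((∀ n, 0 ≤ μ n) ∧ IsPosDef μ ∧ μ 0 = 1) ↔
      μ ∈ convexHull ℝ ({p₁, p₂, p₃, p₄} : Set (ZMod 5 → ℝ)) := by
  refine ⟨?_, fun h =>
    convexHull_min insert_subset_setOf_normalized_isPosDef convex_setOf_normalized_isPosDef h⟩
  rintro ⟨hμ₀, hμ, hμ₁⟩
  have h₄ : μ 4 = μ 1 := hμ.map_neg 1
  have h₃ : μ 3 = μ 2 := hμ.map_neg 2
  have I₁ := hμ.fourier_ineq_zmod_five
  have I₂ : (1 + γ) * (μ 4 + μ 1) ≤ 2 * μ 0 + γ * (μ 2 + μ 3) :=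
    (hμ.comp_addMonoidHom (AddMonoidHom.mulLeft 2)).fourier_ineq_zmod_five
  rw [h₃, h₄, hμ₁] at I₁ I₂
  obtain ⟨w₁, w₂, w₃, w₄, hw₁, hw₂, hw₃, hw₄, hw, ha, hb⟩ :=
    exists_convex_weights (hμ₀ 1) (hμ₀ 2) (by linarith) (by linarith)
  convert smul_add_smul_add_smul_add_smul_mem_convexHull hw₁ hw₂ hw₃ hw₄ hw
  funext n
  obtain rfl | rfl | rfl | rfl | rfl := zmod_five_cases n <;>
    simp +decide only [Pi.add_apply, Pi.smul_apply, smul_eq_mul, p₁, p₂, p₃, p₄, if_true, if_false,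
      mul_one, mul_zero, add_zero, zero_add] <;> linarith
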